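/- Let ω ∈ ℝ and let P : ℝ³ → ℝ be a nonzero Schwartz function satisfying −ΔP(x) + P(x)⁵ − P(x)³ + ω·P(x) = 0 for every x ∈ ℝ³. Set β := (∫|P|⁶ dx)/(∫|∇P|² dx) and define R : ℝ³ → ℝ by R(x) := √((1+β)/(4β)) · P( (3(1+β)/(4√(3β))) · x ). Then V(R) = 0. -/

import Mathlib

/-!
Testing the equation `ΔP = P⁵ - P³ + ωP` against `P` (Nehari) and against the Euler field
`x · ∇P` (Pohozaev), and integrating by parts, gives two linear relations between `∫|∇P|²`,
`∫P⁶`, `∫P⁴` and `ω∫P²`. Eliminating `ω∫P²` leaves `(3/4)∫P⁴ = ∫|∇P|² + ∫P⁶`. Under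
`x ↦ a P(c x)` the three terms of the virial scale by `a²c²`, `a⁶` and `a⁴` (times the Jacobian
`c⁻³`); writing `K = ∫|∇P|²` and `S = ∫P⁶ = βK`, the choice of `a` and `c` in `R` is exactly
what makes `a²c² K + a⁶ S = a⁴ (K + S)`.
-/

open MeasureTheory

noncomputable section

abbrev E3 := EuclideanSpace ℝ (Fin 3)

/-- The Laplacian: sum of second partial derivatives. -/
def lap (P : SchwartzMap E3 ℝ) (x : E3) : ℝ :=
  ∑ i : Fin 3,
    fderiv ℝ (fun y => fderiv ℝ P y (EuclideanSpace.single i 1)) x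
      (EuclideanSpace.single i 1)

/-- The virial of a real-valued function on ℝ³. -/
def Vfun (f : E3 → ℝ) : ℝ :=
  ∫ x : E3, (‖fderiv ℝ f x‖ ^ 2 + ‖f x‖ ^ 6 - (3 / 4) * ‖f x‖ ^ 4)


open SchwartzMap LineDeriv Laplacian Module
open scoped RealInnerProductSpace

namespace Pohozaev

section EulerDeriv

variable {E : Type*} [NormedAddCommGroup E] [NormedSpace ℝ E]

/-- The Euler derivative `x ↦ x · ∇f(x)`. -/
def eulerDeriv (f : 𝓢(E, ℝ)) : 𝓢(E, ℝ) :=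
  bilinLeftCLM (ContinuousLinearMap.id ℝ (E →L[ℝ] ℝ)) Function.HasTemperateGrowth.id'
    (fderivCLM ℝ E ℝ f)

theorem eulerDeriv_apply (f : 𝓢(E, ℝ)) (x : E) : eulerDeriv f x = fderiv ℝ f x x := rfl

theorem lineDerivOp_eulerDeriv (v : E) (f : 𝓢(E, ℝ)) :
    ∂_{v} (eulerDeriv f) = ∂_{v} f + eulerDeriv (∂_{v} f) := by
  ext x
  have hf2 : DifferentiableAt ℝ (fderiv ℝ f) x := (fderivCLM ℝ E ℝ f).differentiableAt
  -- `[∂_v, x · ∇] = ∂_v` rests on the symmetry of the second derivative.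
  have hsymm := ((f.smooth ⊤).contDiffAt (x := x)).isSymmSndFDerivAt
    (by simp; exact WithTop.coe_le_coe.2 le_top)
  have he : (eulerDeriv f : E → ℝ) = fun y ↦ fderiv ℝ f y y := rfl
  have hd : ((∂_{v} f : 𝓢(E, ℝ)) : E → ℝ) = fun y ↦ fderiv ℝ f y v := rfl
  rw [add_apply, eulerDeriv_apply, lineDerivOp_apply_eq_fderiv, lineDerivOp_apply_eq_fderiv,
    he, hd, fderiv_clm_apply hf2 differentiableAt_fun_id,
    fderiv_clm_apply hf2 (differentiableAt_const v)]
  simp [hsymm x v]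

end EulerDeriv

variable {E : Type*} [NormedAddCommGroup E] [InnerProductSpace ℝ E] [FiniteDimensional ℝ E]
  [MeasurableSpace E] [BorelSpace E] {μ : Measure E} [μ.IsAddHaarMeasure]

theorem integrable_mul_of_hasTemperateGrowth (f : 𝓢(E, ℝ)) {g : E → ℝ}
    (hg : g.HasTemperateGrowth) : Integrable (fun x ↦ f x * g x) μ := by
  convert (smulLeftCLM ℝ g f).integrable (μ := μ) using 1
  ext x
  simp [hg, mul_comm]

theorem integral_eulerDeriv (f : 𝓢(E, ℝ)) :
    ∫ x, eulerDeriv f x ∂μ = -(finrank ℝ E) * ∫ x, f x ∂μ := by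
  let b := stdOrthonormalBasis ℝ E
  have hsplit (x : E) : eulerDeriv f x = ∑ i, ∂_{b i} f x * ⟪b i, x⟫ := by
    rw [eulerDeriv_apply]
    conv_lhs => arg 2; rw [← b.sum_repr' x]
    simp [lineDerivOp_apply_eq_fderiv, mul_comm]
  have hinner (i) (x : E) : fderiv ℝ (fun y ↦ ⟪b i, y⟫) x (b i) = 1 := by
    rw [show fderiv ℝ (fun y ↦ ⟪b i, y⟫) x = innerSL ℝ (b i) from (innerSL ℝ (b i)).fderiv]
    simp [b.orthonormal.1 i]
  have hcoord (i) : ∫ x, ∂_{b i} f x * ⟪b i, x⟫ ∂μ = -∫ x, f x ∂μ := by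
    have := integral_mul_fderiv_eq_neg_fderiv_mul_of_integrable (μ := μ)
      (f := f) (g := fun x ↦ ⟪b i, x⟫) (v := b i)
      (integrable_mul_of_hasTemperateGrowth (∂_{b i} f) (by fun_prop))
      (by simpa [hinner] using f.integrable (μ := μ))
      (integrable_mul_of_hasTemperateGrowth f (by fun_prop))
      (fun x _ ↦ f.differentiableAt) (fun x _ ↦ (innerSL ℝ (b i)).differentiableAt)
    simp only [hinner, mul_one] at this
    rw [this, neg_neg]
    rfl
  simp_rw [hsplit]
  rw [integral_finsetSum _ fun i _ ↦
    integrable_mul_of_hasTemperateGrowth (∂_{b i} f) (by fun_prop)]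
  simp [hcoord]

theorem integral_eulerDeriv_mul_pow (f : 𝓢(E, ℝ)) (k : ℕ) :
    ∫ x, eulerDeriv f x * f x ^ k ∂μ = -(finrank ℝ E / (k + 1)) * ∫ x, f x ^ (k + 1) ∂μ := by
  let g := smulLeftCLM ℝ (fun x ↦ f x ^ k) f
  have hg : (g : E → ℝ) = fun x ↦ f x ^ (k + 1) := by
    ext x
    simp [g, pow_succ, (by fun_prop : (fun x ↦ f x ^ k).HasTemperateGrowth)]
  have hfd (x : E) : eulerDeriv g x = (k + 1) * (eulerDeriv f x * f x ^ k) := by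
    rw [eulerDeriv_apply, eulerDeriv_apply, hg, ((f.hasFDerivAt x).pow (k + 1)).fderiv]
    simp only [add_tsub_cancel_right, nsmul_eq_mul, Nat.cast_add, Nat.cast_one, smul_apply,
      smul_eq_mul]
    ring
  have := integral_eulerDeriv (μ := μ) g
  simp_rw [hfd, hg, integral_const_mul] at this
  field_simp
  linarith

theorem integral_eulerDeriv_mul_lineDerivOp_lineDerivOp (f : 𝓢(E, ℝ)) (v : E) :
    ∫ x, eulerDeriv f x * ∂_{v} (∂_{v} f) x ∂μ
      = (finrank ℝ E / 2 - 1) * ∫ x, ∂_{v} f x ^ 2 ∂μ := by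
  have h := integral_eulerDeriv_mul_pow (μ := μ) (∂_{v} f) 1
  rw [integral_mul_lineDerivOp_right_eq_neg_left, lineDerivOp_eulerDeriv]
  simp only [add_apply, add_mul, pow_one] at h ⊢
  rw [integral_add (integrable_mul_of_hasTemperateGrowth _ (by fun_prop))
    (integrable_mul_of_hasTemperateGrowth _ (by fun_prop)), h]
  simp only [← pow_two]
  ring

theorem integral_mul_laplacian_eq_sum {ι : Type*} [Fintype ι] (b : OrthonormalBasis ι ℝ E)
    (g f : 𝓢(E, ℝ)) :
    ∫ x, g x * Δ f x ∂μ = ∑ i, ∫ x, g x * ∂_{b i} (∂_{b i} f) x ∂μ := by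
  simp_rw [laplacian_eq_sum b, sum_apply, Finset.mul_sum]
  exact integral_finsetSum _ fun i _ ↦ integrable_mul_of_hasTemperateGrowth _ (by fun_prop)

theorem integral_norm_fderiv_sq_eq_sum {ι : Type*} [Fintype ι] (b : OrthonormalBasis ι ℝ E)
    (f : 𝓢(E, ℝ)) :
    ∫ x, ‖fderiv ℝ f x‖ ^ 2 ∂μ = ∑ i, ∫ x, ∂_{b i} f x ^ 2 ∂μ := by
  simp_rw [b.norm_dual, ← lineDerivOp_apply_eq_fderiv]
  exact integral_finsetSum _ fun i _ ↦ by
    simpa [pow_two] using integrable_mul_of_hasTemperateGrowth (μ := μ) (∂_{b i} f)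
      (by fun_prop)

theorem integral_eulerDeriv_mul_laplacian (f : 𝓢(E, ℝ)) :
    ∫ x, eulerDeriv f x * Δ f x ∂μ = (finrank ℝ E / 2 - 1) * ∫ x, ‖fderiv ℝ f x‖ ^ 2 ∂μ := by
  let b := stdOrthonormalBasis ℝ E
  rw [integral_mul_laplacian_eq_sum b, integral_norm_fderiv_sq_eq_sum b, Finset.mul_sum]
  simp_rw [integral_eulerDeriv_mul_lineDerivOp_lineDerivOp]

theorem integral_mul_laplacian (f : 𝓢(E, ℝ)) :
    ∫ x, f x * Δ f x ∂μ = -∫ x, ‖fderiv ℝ f x‖ ^ 2 ∂μ := by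
  let b := stdOrthonormalBasis ℝ E
  rw [integral_mul_laplacian_eq_sum b, integral_norm_fderiv_sq_eq_sum b,
    ← Finset.sum_neg_distrib]
  refine Finset.sum_congr rfl fun i _ ↦ ?_
  rw [integral_mul_lineDerivOp_right_eq_neg_left]
  simp only [pow_two]

theorem lap_eq_laplacian (P : 𝓢(E3, ℝ)) (x : E3) : lap P x = Δ P x := by
  simp only [laplacian_eq_sum (EuclideanSpace.basisFun (Fin 3) ℝ), sum_apply,
    EuclideanSpace.basisFun_apply]
  rfl

theorem integral_pow_four_eq_of_solution {ω : ℝ} (P : 𝓢(E3, ℝ))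
    (hPDE : ∀ x : E3, -lap P x + P x ^ 5 - P x ^ 3 + ω * P x = 0) :
    3 / 4 * ∫ x, ‖P x‖ ^ 4 = (∫ x, ‖fderiv ℝ P x‖ ^ 2) + ∫ x, ‖P x‖ ^ 6 := by
  have hΔ (x : E3) : Δ P x = P x ^ 5 - P x ^ 3 + ω * P x ^ 1 := by
    rw [← lap_eq_laplacian]
    linarith [hPDE x]
  have hint (g : 𝓢(E3, ℝ)) (k : ℕ) : Integrable (fun x ↦ g x * P x ^ k) :=
    integrable_mul_of_hasTemperateGrowth g (by fun_prop)
  have hsplit (g : 𝓢(E3, ℝ)) : ∫ x, g x * Δ P x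
      = (∫ x, g x * P x ^ 5) - (∫ x, g x * P x ^ 3) + ω * ∫ x, g x * P x ^ 1 := by
    have h53 : Integrable (fun x ↦ g x * P x ^ 5 - g x * P x ^ 3) := (hint g 5).sub (hint g 3)
    simp_rw [hΔ, mul_add, mul_sub, mul_left_comm _ ω]
    rw [integral_add h53 ((hint g 1).const_mul ω),
      integral_sub (hint g 5) (hint g 3), integral_const_mul]
  have hnehari := integral_mul_laplacian (μ := volume) P
  have hpohozaev := integral_eulerDeriv_mul_laplacian (μ := volume) P
  rw [hsplit] at hnehari hpohozaev
  simp only [← pow_succ', Nat.reduceAdd] at hnehari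
  rw [integral_eulerDeriv_mul_pow, integral_eulerDeriv_mul_pow, integral_eulerDeriv_mul_pow,
    finrank_euclideanSpace_fin] at hpohozaev
  simp_rw [Real.norm_eq_abs, (by decide : Even 4).pow_abs, (by decide : Even 6).pow_abs]
  norm_num at hpohozaev
  linarith

theorem Vfun_const_mul_comp_smul (P : 𝓢(E3, ℝ)) (a c : ℝ) :
    Vfun (fun x ↦ a * P (c • x)) = |(c ^ 3)⁻¹| * (a ^ 2 * c ^ 2 * (∫ x, ‖fderiv ℝ P x‖ ^ 2)
      + a ^ 6 * (∫ x, ‖P x‖ ^ 6) - a ^ 4 * (3 / 4 * ∫ x, ‖P x‖ ^ 4)) := by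
  have hfd (x : E3) : fderiv ℝ (fun x ↦ a * P (c • x)) x = (a * c) • fderiv ℝ P (c • x) := by
    have hd : DifferentiableAt ℝ (fun x ↦ P (c • x)) x :=
      P.differentiableAt.comp x (differentiableAt_id.const_smul c)
    rw [fderiv_const_mul hd, fderiv_comp_smul, smul_smul]
  have hpow (k : ℕ) (hk : Even k) (r : ℝ) : ‖r‖ ^ k = r ^ k := by
    rw [Real.norm_eq_abs, hk.pow_abs]
  have I2 : Integrable (fun x ↦ ‖fderiv ℝ P x‖ ^ 2) := by
    simpa using ((fderivCLM ℝ E3 ℝ P).memLp (2 : ℕ)).integrable_norm_pow two_ne_zero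
  have I4 : Integrable (fun x ↦ ‖P x‖ ^ 4) := (P.memLp (4 : ℕ)).integrable_norm_pow (by norm_num)
  have I6 : Integrable (fun x ↦ ‖P x‖ ^ 6) := (P.memLp (6 : ℕ)).integrable_norm_pow (by norm_num)
  let h (y : E3) : ℝ :=
    a ^ 2 * c ^ 2 * ‖fderiv ℝ P y‖ ^ 2 + a ^ 6 * ‖P y‖ ^ 6 - a ^ 4 * (3 / 4 * ‖P y‖ ^ 4)
  calc Vfun (fun x ↦ a * P (c • x))
      = ∫ x, h (c • x) := by
        simp only [Vfun, h, hfd, norm_smul, norm_mul, mul_pow, hpow 2 even_two,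
          hpow 4 (by decide) a, hpow 6 (by decide) a]
        ring_nf
    _ = |(c ^ 3)⁻¹| * ∫ y, h y := by
      rw [Measure.integral_comp_smul, finrank_euclideanSpace_fin, smul_eq_mul]
    _ = _ := by
      have I26 : Integrable (fun y ↦ a ^ 2 * c ^ 2 * ‖fderiv ℝ P y‖ ^ 2 + a ^ 6 * ‖P y‖ ^ 6) :=
        (I2.const_mul _).add (I6.const_mul _)
      simp only [h]
      rw [integral_sub I26 ((I4.const_mul _).const_mul _), integral_add (I2.const_mul _)
        (I6.const_mul _), integral_const_mul, integral_const_mul, integral_const_mul,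
        integral_const_mul]

theorem soliton_rescaling_balance {K S : ℝ} (hK : 0 ≤ K) (hS : 0 ≤ S) :
    √((1 + S / K) / (4 * (S / K))) ^ 2 * (3 * (1 + S / K) / (4 * √(3 * (S / K)))) ^ 2 * K
      + √((1 + S / K) / (4 * (S / K))) ^ 6 * S
      - √((1 + S / K) / (4 * (S / K))) ^ 4 * (K + S) = 0 := by
  have hβ0 : 0 ≤ S / K := div_nonneg hS hK
  generalize hβ : S / K = β at hβ0 ⊢
  rcases hβ0.eq_or_lt with rfl | hβpos
  · -- Here `√((1 + 0) / (4 * 0)) = √0 = 0`: the rescaled function vanishes.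
    simp
  have hK0 : K ≠ 0 := by
    rintro rfl
    simp [← hβ] at hβpos
  have hSK : S = β * K := by rw [← hβ, div_mul_cancel₀ S hK0]
  set a := √((1 + β) / (4 * β))
  have ha2 : a ^ 2 = (1 + β) / (4 * β) := Real.sq_sqrt (by positivity)
  have hs2 : √(3 * β) ^ 2 = 3 * β := Real.sq_sqrt (by positivity)
  simp only [div_pow, mul_pow, hs2]
  rw [show a ^ 6 = (a ^ 2) ^ 3 by ring, show a ^ 4 = (a ^ 2) ^ 2 by ring, ha2, hSK]
  field_simp
  ring

end Pohozaev

open Pohozaev in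
theorem rescaled_soliton_zero_virial_general (ω : ℝ) (P : SchwartzMap E3 ℝ)
    (hPDE : ∀ x : E3, -lap P x + P x ^ 5 - P x ^ 3 + ω * P x = 0) :
    Vfun (fun x : E3 =>
      Real.sqrt
          ((1 + (∫ y : E3, ‖P y‖ ^ 6) / (∫ y : E3, ‖fderiv ℝ P y‖ ^ 2)) /
            (4 * ((∫ y : E3, ‖P y‖ ^ 6) / (∫ y : E3, ‖fderiv ℝ P y‖ ^ 2)))) *
        P ((3 * (1 + (∫ y : E3, ‖P y‖ ^ 6) / (∫ y : E3, ‖fderiv ℝ P y‖ ^ 2)) /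
            (4 * Real.sqrt
              (3 * ((∫ y : E3, ‖P y‖ ^ 6) / (∫ y : E3, ‖fderiv ℝ P y‖ ^ 2))))) • x))
      = 0 := by
  rw [Vfun_const_mul_comp_smul, integral_pow_four_eq_of_solution P hPDE]
  refine mul_eq_zero_of_right _ (soliton_rescaling_balance ?_ ?_) <;>
    exact integral_nonneg fun _ ↦ by positivity

theorem rescaled_soliton_zero_virial (ω : ℝ) (P : SchwartzMap E3 ℝ) (hP : P ≠ 0)
    (hPDE : ∀ x : E3, -lap P x + P x ^ 5 - P x ^ 3 + ω * P x = 0) :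
    Vfun (fun x : E3 =>
      Real.sqrt
          ((1 + (∫ y : E3, ‖P y‖ ^ 6) / (∫ y : E3, ‖fderiv ℝ P y‖ ^ 2)) /
            (4 * ((∫ y : E3, ‖P y‖ ^ 6) / (∫ y : E3, ‖fderiv ℝ P y‖ ^ 2)))) *
        P ((3 * (1 + (∫ y : E3, ‖P y‖ ^ 6) / (∫ y : E3, ‖fderiv ℝ P y‖ ^ 2)) /
            (4 * Real.sqrt
              (3 * ((∫ y : E3, ‖P y‖ ^ 6) / (∫ y : E3, ‖fderiv ℝ P y‖ ^ 2))))) • x))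
      = 0 :=
  rescaled_soliton_zero_virial_general ω P hPDE
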